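/- In the setting of a (P2+P3, complement-of-(P2+P3))-free graph G with induced 5-cycle C on v1,...,v5, for every i in {1,...,5} the set V_{i,i+2} is an independent set. -/
import Mathlib


/-- `G` contains no induced subgraph isomorphic to `H`. -/
def InducedFree {α V : Type*} (G : SimpleGraph V) (H : SimpleGraph α) : Prop :=
  ∀ f : α ↪ V, ¬ (∀ a b : α, H.Adj a b ↔ G.Adj (f a) (f b))

/-- `P₂ + P₃`: the disjoint union of a 2-vertex path and a 3-vertex path. -/
def P2PlusP3 : SimpleGraph (Fin 5) :=
  SimpleGraph.fromRel fun a b => (a = 0 ∧ b = 1) ∨ (a = 2 ∧ b = 3) ∨ (a = 3 ∧ b = 4)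

/-- `VS G v S`: the vertices outside the 5-cycle `v 0, …, v 4` whose
neighbourhood on the cycle is exactly `{v i : i ∈ S}`. -/
def VS {V : Type*} (G : SimpleGraph V) (v : ZMod 5 → V) (S : Set (ZMod 5)) : Set V :=
  {x | (∀ i, x ≠ v i) ∧ ∀ i, G.Adj x (v i) ↔ i ∈ S}

/-- For each `i`, the set `V_{i,i+2}` is an independent set. -/
theorem stmt_13 {V : Type*} [Fintype V] (G : SimpleGraph V)
    (hG : InducedFree G P2PlusP3) (hGc : InducedFree Gᶜ P2PlusP3)
    (v : ZMod 5 → V) (hv : Function.Injective v)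
    (hC : ∀ i j : ZMod 5, G.Adj (v i) (v j) ↔ j = i + 1 ∨ j = i - 1) :
    ∀ i : ZMod 5, ∀ x ∈ VS G v {i, i + 2}, ∀ y ∈ VS G v {i, i + 2}, ¬ G.Adj x y := by
  intro i x hx y hy hxy
  obtain ⟨hxv, hxA⟩ := hx
  obtain ⟨hyv, hyA⟩ := hy
  -- arithmetic helper in ZMod 5
  have key : ∀ c d : ZMod 5, c ≠ d → i + c ≠ i + d := fun c d h hh => h (add_left_cancel hh)
  have a1 : i + 1 ≠ i := fun h => key 1 0 (by decide) (by simpa using h)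
  have a2 : i + 1 ≠ i + 2 := key 1 2 (by decide)
  have a3 : i + 2 ≠ i := fun h => key 2 0 (by decide) (by simpa using h)
  -- adjacency facts for x and y
  have hxi : G.Adj x (v i) := (hxA i).2 (Or.inl rfl)
  have hxi2 : G.Adj x (v (i + 2)) := (hxA (i + 2)).2 (Or.inr rfl)
  have hxi1 : ¬ G.Adj x (v (i + 1)) := fun h => by
    rcases (hxA (i + 1)).1 h with h' | h'
    · exact a1 h'
    · exact a2 h'
  have hyi : G.Adj y (v i) := (hyA i).2 (Or.inl rfl)
  have hyi2 : G.Adj y (v (i + 2)) := (hyA (i + 2)).2 (Or.inr rfl)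
  have hyi1 : ¬ G.Adj y (v (i + 1)) := fun h => by
    rcases (hyA (i + 1)).1 h with h' | h'
    · exact a1 h'
    · exact a2 h'
  -- cycle adjacency facts
  have c01 : G.Adj (v i) (v (i + 1)) := (hC i (i + 1)).2 (Or.inl rfl)
  have c12 : G.Adj (v (i + 1)) (v (i + 2)) := (hC (i + 1) (i + 2)).2 (Or.inl (by ring))
  have c02 : ¬ G.Adj (v i) (v (i + 2)) := fun h => by
    rcases (hC i (i + 2)).1 h with h' | h'
    · exact key 2 1 (by decide) h'
    · exact key 2 (-1) (by decide) (by rw [h']; ring)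
  -- nonequalities among vertices
  have n01 : v i ≠ v (i + 1) := fun h => a1 (hv h).symm
  have n02 : v i ≠ v (i + 2) := fun h => a3 (hv h).symm
  have n12 : v (i + 1) ≠ v (i + 2) := fun h => a2 (hv h)
  have dxy : x ≠ y := G.ne_of_adj hxy
  have nx0 : x ≠ v i := hxv i
  have nx1 : x ≠ v (i + 1) := hxv (i + 1)
  have nx2 : x ≠ v (i + 2) := hxv (i + 2)
  have ny0 : y ≠ v i := hyv i
  have ny1 : y ≠ v (i + 1) := hyv (i + 1)
  have ny2 : y ≠ v (i + 2) := hyv (i + 2)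
  -- symmetric versions
  have hxi' := hxi.symm
  have hxi2' := hxi2.symm
  have hyi' := hyi.symm
  have hyi2' := hyi2.symm
  have c01' := c01.symm
  have c12' := c12.symm
  have hxy' := hxy.symm
  have hxi1' : ¬ G.Adj (v (i + 1)) x := fun h => hxi1 h.symm
  have hyi1' : ¬ G.Adj (v (i + 1)) y := fun h => hyi1 h.symm
  have c02' : ¬ G.Adj (v (i + 2)) (v i) := fun h => c02 h.symm
  -- the embedding realizing P2+P3 in Gᶜ on {v i, v (i+2), x, v (i+1), y}
  have inj : Function.Injective ![v i, v (i + 2), x, v (i + 1), y] := by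
    intro a b hab
    fin_cases a <;> fin_cases b <;>
      simp only [Matrix.cons_val_zero, Matrix.cons_val_one, Matrix.head_cons,
        Matrix.cons_val_two, Matrix.tail_cons, Matrix.cons_val_three,
        Matrix.cons_val_four] at hab <;>
      first
      | rfl
      | exact absurd hab (by first
          | exact n01 | exact n02 | exact n12 | exact dxy
          | exact nx0 | exact nx1 | exact nx2
          | exact ny0 | exact ny1 | exact ny2
          | exact n01.symm | exact n02.symm | exact n12.symm | exact dxy.symm
          | exact nx0.symm | exact nx1.symm | exact nx2.symm
          | exact ny0.symm | exact ny1.symm | exact ny2.symm)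
  refine hGc ⟨![v i, v (i + 2), x, v (i + 1), y], inj⟩ ?_
  intro a b
  fin_cases a <;> fin_cases b <;>
    simp [P2PlusP3, SimpleGraph.compl_adj, hxy, hxi, hxi2, hyi, hyi2, c01, c12,
      hxi1, hyi1, c02, hxi', hxi2', hyi', hyi2', c01', c12', hxy', hxi1', hyi1', c02',
      n01, n02, n12, dxy, nx0, nx1, nx2, ny0, ny1, ny2,
      n01.symm, n02.symm, n12.symm, dxy.symm, nx0.symm, nx1.symm, nx2.symm,
      ny0.symm, ny1.symm, ny2.symm]
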